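/- arXiv:2202.09902 — 2 statements merged into one kernel-verified Lean document; each statement's English description precedes it below -/
import Mathlib

section
/- Suppose the C-sequence ⟨C_α : α < κ⟩ is coherent, meaning C_δ = C_α ∩ δ for all α < κ and δ ∈ acc(C_α). If λ₂(γ,β) < α < γ < β < κ, then im(tr_h(α,β)) = im(tr_h(α,γ)) ∪ im(tr_h(γ,β)) for the derived coloring tr_h, where h(α) := min(C_α) if min(C_α) < μ and h(α) := 0 otherwise (for a fixed cardinal μ ≤ κ). In particular, for d(α,β) := max(im(tr_h(α,β))), one has d(α,β) = max{d(α,γ), d(γ,β)}. -/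
open Cardinal Set

/-- The walk `Tr(α,β) : ω → κ` along the `C`-sequence `C`:
`Tr(α,β)(0) = β`; `Tr(α,β)(n+1) = min(C_{Tr(α,β)(n)} \ α)` as long as the previous
step is above `α`, and `α` from then on. -/
noncomputable def TrW (C : Ordinal → Set Ordinal) (α β : Ordinal) : ℕ → Ordinal
  | 0 => β
  | n + 1 => if α < TrW C α β n then sInf (C (TrW C α β n) ∩ Set.Ici α) else α

/-- `ρ₂(α,β)`: the length of the walk from `β` down to `α`. -/
noncomputable def rho2 (C : Ordinal → Set Ordinal) (α β : Ordinal) : ℕ :=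
  sInf {n : ℕ | TrW C α β n = α}

/-- The image of `tr(α,β) = Tr(α,β) ↾ ρ₂(α,β)`. -/
noncomputable def trIm (C : Ordinal → Set Ordinal) (α β : Ordinal) : Set Ordinal :=
  (fun n => TrW C α β n) '' {n : ℕ | n < rho2 C α β}

/-- `λ(α,β) := max{sup(C_{Tr(α,β)(i)} ∩ α) : i < ρ₂(α,β)}`. -/
noncomputable def lamW (C : Ordinal → Set Ordinal) (α β : Ordinal) : Ordinal :=
  sSup {x | ∃ n < rho2 C α β, x = sSup (C (TrW C α β n) ∩ Set.Iio α)}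

/-- `λ₂(α,β) := sup(α ∩ {sup(C_δ ∩ α) : δ ∈ im(tr(α,β))})`. -/
noncomputable def lam2 (C : Ordinal → Set Ordinal) (α β : Ordinal) : Ordinal :=
  sSup (Set.Iio α ∩ {x | ∃ δ ∈ trIm C α β, x = sSup (C δ ∩ Set.Iio α)})

/-- `acc(s) := {δ ∈ s : sup(s ∩ δ) = δ > 0}`. -/
def accSet (s : Set Ordinal) : Set Ordinal := {δ ∈ s | 0 < δ ∧ sSup (s ∩ Set.Iio δ) = δ}

/-- `C` is a `C`-sequence over `κ`: each `C α` is a closed subset of `α`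
with `sup (C α) = sup α`. -/
def IsCSeq (κo : Ordinal) (C : Ordinal → Set Ordinal) : Prop :=
  ∀ α < κo, (∀ x ∈ C α, x < α) ∧ sSup (C α) = sSup (Set.Iio α) ∧
    ∀ δ < α, 0 < δ → sSup (C α ∩ Set.Iio δ) = δ → δ ∈ C α

/-- The coloring `h : κ → κ` given by `h(α) := min(C_α)` if `min(C_α) < μ`, else `0`. -/
noncomputable def hColor (C : Ordinal → Set Ordinal) (μ : Cardinal) (α : Ordinal) : Ordinal :=
  if sInf (C α) < μ.ord then sInf (C α) else 0

/-- The coloring `d(α,β) := max(im(tr_h(α,β)))`, where `im(tr_h(α,β)) = h '' im(tr(α,β))`. -/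
noncomputable def dColor (C : Ordinal → Set Ordinal) (μ : Cardinal) (α β : Ordinal) : Ordinal :=
  sSup (hColor C μ '' trIm C α β)

/-!
Since `λ₂(γ,β) < α`, no `C_δ` met on the walk from `β` to `γ` has points in `[α, γ)` unless
`γ` is a limit point of it, so the walks from `β` to `α` and to `γ` agree up to the last point `δ`
of `tr(γ,β)`. From `δ` the walk to `α` either steps to `γ` and continues as `tr(α,γ)`, or, when
`γ ∈ acc(C_δ)`, coherence gives `C_γ = C_δ ∩ γ`, so it skips `γ` and steps straight to the second
point of `tr(α,γ)`; then `h(γ) = min C_γ = min C_δ = h(δ)` is still a colour of `tr(α,β)`.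
-/
section Walk

variable {C : Ordinal → Set Ordinal} {a b : Ordinal}

@[simp]
theorem TrW_zero : TrW C a b 0 = b := rfl

theorem TrW_succ_of_lt {n : ℕ} (h : a < TrW C a b n) :
    TrW C a b (n + 1) = sInf (C (TrW C a b n) ∩ Ici a) := by
  simp only [TrW, if_pos h]

theorem TrW_add (k n : ℕ) : TrW C a b (k + n) = TrW C a (TrW C a b k) n := by
  induction n with
  | zero => rfl
  | succ n ih =>
    rw [← Nat.add_assoc]
    simp only [TrW, ih]

theorem TrW_eq_of_le {k n : ℕ} (hk : TrW C a b k = a) (hkn : k ≤ n) : TrW C a b n = a := by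
  induction n, hkn using Nat.le_induction with
  | base => exact hk
  | succ n _ ih => simp [TrW, ih]

theorem range_TrW (k : ℕ) :
    range (TrW C a b) = TrW C a b '' Iio k ∪ range (TrW C a (TrW C a b k)) := by
  ext y
  simp only [mem_range, mem_union, mem_image, mem_Iio, ← TrW_add]
  constructor
  · rintro ⟨n, rfl⟩
    rcases lt_or_ge n k with hn | hn
    · exact Or.inl ⟨n, hn, rfl⟩
    · obtain ⟨j, rfl⟩ := Nat.exists_eq_add_of_le hn
      exact Or.inr ⟨j, rfl⟩
  · rintro (⟨n, -, rfl⟩ | ⟨j, rfl⟩) <;> exact ⟨_, rfl⟩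

theorem TrW_ne_iff_lt_rho2 (hhit : ∃ n, TrW C a b n = a) {n : ℕ} :
    TrW C a b n ≠ a ↔ n < rho2 C a b := by
  refine ⟨fun hn => not_le.mp fun hle => hn (TrW_eq_of_le (Nat.sInf_mem hhit) hle),
    fun hn => Nat.notMem_of_lt_sInf hn⟩

theorem trIm_eq_range_diff (hhit : ∃ n, TrW C a b n = a) :
    trIm C a b = range (TrW C a b) \ {a} := by
  ext y
  simp only [trIm, mem_image, mem_ofPred_eq, mem_sdiff, mem_range, mem_singleton_iff,
    ← TrW_ne_iff_lt_rho2 hhit]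
  constructor
  · rintro ⟨n, hn, rfl⟩; exact ⟨⟨n, rfl⟩, hn⟩
  · rintro ⟨⟨n, rfl⟩, hn⟩; exact ⟨n, hn, rfl⟩

theorem finite_trIm : (trIm C a b).Finite :=
  (Set.finite_lt_nat _).image _

end Walk

theorem csInf_inter_Iio {α : Type*} [ConditionallyCompleteLinearOrderBot α] [WellFoundedLT α]
    {s : Set α} {g : α} (hne : (s ∩ Iio g).Nonempty) : sInf (s ∩ Iio g) = sInf s := by
  obtain ⟨x, hxs, hxg⟩ := hne
  have hmem : sInf s ∈ s ∩ Iio g :=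
    ⟨csInf_mem ⟨x, hxs⟩, (csInf_le (OrderBot.bddBelow s) hxs).trans_lt hxg⟩
  exact IsLeast.csInf_eq ⟨hmem, fun y hy => csInf_le (OrderBot.bddBelow s) hy.1⟩

theorem inter_Ici_eq_of_lam2_lt {C : Ordinal → Set Ordinal} {α β γ δ : Ordinal}
    (h1 : lam2 C γ β < α) (hαγ : α ≤ γ) (hδ : δ ∈ trIm C γ β)
    (hsup : sSup (C δ ∩ Iio γ) < γ) : C δ ∩ Ici α = C δ ∩ Ici γ := by
  ext y
  refine ⟨fun ⟨hy, hαy⟩ => ⟨hy, mem_Ici.mpr <| not_lt.mp fun hyγ => ?_⟩,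
    fun ⟨hy, hγy⟩ => ⟨hy, hαγ.trans hγy⟩⟩
  have hy_le : y ≤ sSup (C δ ∩ Iio γ) :=
    le_csSup (bddAbove_Iio.mono inter_subset_right) ⟨hy, hyγ⟩
  have hsup_le : sSup (C δ ∩ Iio γ) ≤ lam2 C γ β :=
    le_csSup (bddAbove_Iio.mono inter_subset_left) ⟨hsup, δ, hδ, rfl⟩
  exact (hy_le.trans hsup_le).not_gt (h1.trans_le hαy)

namespace IsCSeq

variable {κo : Ordinal} {C : Ordinal → Set Ordinal}

theorem nonempty_inter_Ici (hC : IsCSeq κo C) {τ x : Ordinal} (hτ : 0 < τ) (hτx : τ < x)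
    (hx : x < κo) : (C x ∩ Ici τ).Nonempty := by
  obtain ⟨-, hsup, hclosed⟩ := hC x hx
  by_contra hempty
  have hsub : C x ⊆ Iio τ := fun y hy => mem_Iio.mpr <| not_le.mp fun hτy => hempty ⟨y, hy, hτy⟩
  have hτsup : sSup (C x ∩ Iio τ) = τ := by
    rw [inter_eq_left.mpr hsub, hsup]
    exact le_antisymm (hsup ▸ csSup_le' fun y hy => (hsub hy).le) (le_csSup bddAbove_Iio hτx)
  exact lt_irrefl τ (hsub (hclosed τ hτx hτ hτsup))

theorem sInf_inter_Ici_mem (hC : IsCSeq κo C) {τ x : Ordinal} (hτ : 0 < τ) (hτx : τ < x)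
    (hx : x < κo) : sInf (C x ∩ Ici τ) ∈ Ici τ ∩ Iio x :=
  have hmem := csInf_mem (hC.nonempty_inter_Ici hτ hτx hx)
  ⟨hmem.2, (hC x hx).1 _ hmem.1⟩

theorem TrW_mem_Icc (hC : IsCSeq κo C) {τ b : Ordinal} (hτ : 0 < τ) (hτb : τ ≤ b) (hb : b < κo)
    (n : ℕ) : TrW C τ b n ∈ Icc τ b := by
  induction n with
  | zero => exact ⟨hτb, le_rfl⟩
  | succ n ih =>
    by_cases hlt : τ < TrW C τ b n
    · rw [TrW_succ_of_lt hlt]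
      have hstep := hC.sInf_inter_Ici_mem hτ hlt (ih.2.trans_lt hb)
      exact ⟨hstep.1, (hstep.2.trans_le ih.2).le⟩
    · simp only [TrW, if_neg hlt]
      exact ⟨le_rfl, hτb⟩

theorem exists_TrW_eq (hC : IsCSeq κo C) {τ b : Ordinal} (hτ : 0 < τ) (hτb : τ ≤ b)
    (hb : b < κo) : ∃ n, TrW C τ b n = τ := by
  by_contra! hne
  obtain ⟨n, hn⟩ := WellFounded.not_rel_apply_succ (r := (· < ·)) (TrW C τ b)
  have hbounds := hC.TrW_mem_Icc hτ hτb hb n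
  have hgt : τ < TrW C τ b n := lt_of_le_of_ne hbounds.1 (hne n).symm
  rw [TrW_succ_of_lt hgt] at hn
  exact hn (hC.sInf_inter_Ici_mem hτ hgt (hbounds.2.trans_lt hb)).2

theorem lt_TrW_of_lt_rho2 (hC : IsCSeq κo C) {τ b : Ordinal} (hτ : 0 < τ) (hτb : τ ≤ b)
    (hb : b < κo) {n : ℕ} (hn : n < rho2 C τ b) : τ < TrW C τ b n :=
  lt_of_le_of_ne (hC.TrW_mem_Icc hτ hτb hb n).1
    ((TrW_ne_iff_lt_rho2 (hC.exists_TrW_eq hτ hτb hb)).mpr hn).symm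

variable {α β γ : Ordinal}

theorem TrW_eq_of_lt_rho2 (hC : IsCSeq κo C) (h1 : lam2 C γ β < α) (h2 : α < γ) (h3 : γ < β)
    (h4 : β < κo) : ∀ n < rho2 C γ β, TrW C α β n = TrW C γ β n := by
  have h0γ : 0 < γ := zero_le.trans_lt (h1.trans h2)
  intro n
  induction n with
  | zero => exact fun _ => rfl
  | succ n ih =>
    intro hn
    set δ := TrW C γ β n
    have hγδ : γ < δ := hC.lt_TrW_of_lt_rho2 h0γ h3.le h4 (Nat.lt_of_succ_lt hn)
    have hδκ : δ < κo := (hC.TrW_mem_Icc h0γ h3.le h4 n).2.trans_lt h4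
    have hnext : sInf (C δ ∩ Ici γ) ≠ γ := by
      rw [← TrW_succ_of_lt hγδ]
      exact (TrW_ne_iff_lt_rho2 (hC.exists_TrW_eq h0γ h3.le h4)).mpr hn
    -- otherwise `γ` would be a limit point of `C δ`, hence in it, and the walk would stop there
    have hsup : sSup (C δ ∩ Iio γ) < γ := by
      refine lt_of_le_of_ne (csSup_le' fun _ hz => le_of_lt hz.2) fun hlim => hnext ?_
      exact IsLeast.csInf_eq ⟨⟨(hC δ hδκ).2.2 γ hγδ h0γ hlim, self_mem_Ici⟩, fun _ hz => hz.2⟩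
    have hδ : δ ∈ trIm C γ β := ⟨n, Nat.lt_of_succ_lt hn, rfl⟩
    rw [TrW_succ_of_lt (ih (Nat.lt_of_succ_lt hn) ▸ h2.trans hγδ), TrW_succ_of_lt hγδ,
      ih (Nat.lt_of_succ_lt hn), inter_Ici_eq_of_lam2_lt h1 h2.le hδ hsup]

theorem trIm_eq_union (hC : IsCSeq κo C) (h1 : lam2 C γ β < α) (h2 : α < γ) (h3 : γ < β)
    (h4 : β < κo) :
    trIm C α β = trIm C γ β ∪ range (TrW C α (TrW C α β (rho2 C γ β))) \ {α} := by
  have h0α : 0 < α := zero_le.trans_lt h1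
  have hprefix : TrW C α β '' Iio (rho2 C γ β) = trIm C γ β :=
    image_congr fun n hn => hC.TrW_eq_of_lt_rho2 h1 h2 h3 h4 n hn
  have hα : α ∉ trIm C γ β := fun ⟨n, _, hn⟩ =>
    h2.not_ge (hn ▸ (hC.TrW_mem_Icc (h0α.trans h2) h3.le h4 n).1)
  rw [trIm_eq_range_diff (hC.exists_TrW_eq h0α (h2.trans h3).le h4), range_TrW (rho2 C γ β),
    hprefix, union_sdiff_distrib, sdiff_singleton_eq_self hα]

theorem TrW_rho2_eq_or (hC : IsCSeq κo C)
    (hcoh : ∀ α < κo, ∀ δ ∈ accSet (C α), C δ = C α ∩ Iio δ)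
    (h1 : lam2 C γ β < α) (h2 : α < γ) (h3 : γ < β) (h4 : β < κo) :
    TrW C α β (rho2 C γ β) = γ ∨
      (∃ δ ∈ trIm C γ β, C γ = C δ ∩ Iio γ) ∧ TrW C α β (rho2 C γ β) = TrW C α γ 1 := by
  have h0α : 0 < α := zero_le.trans_lt h1
  have h0γ : 0 < γ := h0α.trans h2
  have hhit := hC.exists_TrW_eq h0γ h3.le h4
  obtain ⟨k, hk⟩ : ∃ k, rho2 C γ β = k + 1 :=
    Nat.exists_eq_succ_of_ne_zero ((TrW_ne_iff_lt_rho2 hhit (n := 0)).mp h3.ne').ne'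
  have hkρ : k < rho2 C γ β := hk ▸ k.lt_succ_self
  set δ := TrW C γ β k
  have hδ : δ ∈ trIm C γ β := ⟨k, hkρ, rfl⟩
  have hγδ : γ < δ := hC.lt_TrW_of_lt_rho2 h0γ h3.le h4 hkρ
  have hδκ : δ < κo := (hC.TrW_mem_Icc h0γ h3.le h4 k).2.trans_lt h4
  have hγnext : sInf (C δ ∩ Ici γ) = γ := by
    rw [← TrW_succ_of_lt hγδ, ← hk]
    exact Nat.sInf_mem hhit
  have hαnext : TrW C α β (rho2 C γ β) = sInf (C δ ∩ Ici α) := by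
    have hagree := hC.TrW_eq_of_lt_rho2 h1 h2 h3 h4 k hkρ
    rw [hk, TrW_succ_of_lt (hagree ▸ h2.trans hγδ), hagree]
  rcases (csSup_le' fun _ hz => le_of_lt hz.2 : sSup (C δ ∩ Iio γ) ≤ γ).lt_or_eq with hlt | hlim
  · left
    rw [hαnext, inter_Ici_eq_of_lam2_lt h1 h2.le hδ hlt, hγnext]
  · have hγC : γ ∈ C δ := hγnext ▸ (csInf_mem (hC.nonempty_inter_Ici h0γ hγδ hδκ)).1
    have hCγ : C γ = C δ ∩ Iio γ := hcoh δ hδκ γ ⟨hγC, h0γ, hlim⟩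
    have hne : (C δ ∩ Ici α ∩ Iio γ).Nonempty := by
      rw [inter_right_comm, ← hCγ]
      exact hC.nonempty_inter_Ici h0α h2 (h3.trans h4)
    right
    refine ⟨⟨δ, hδ, hCγ⟩, ?_⟩
    rw [hαnext, TrW_succ_of_lt (n := 0) h2, TrW_zero, hCγ, inter_right_comm,
      csInf_inter_Iio hne]

theorem insert_trIm_eq_union (hC : IsCSeq κo C)
    (hcoh : ∀ α < κo, ∀ δ ∈ accSet (C α), C δ = C α ∩ Iio δ)
    (h1 : lam2 C γ β < α) (h2 : α < γ) (h3 : γ < β) (h4 : β < κo) :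
    insert γ (trIm C α β) = trIm C γ β ∪ trIm C α γ := by
  have hαγ : trIm C α γ = range (TrW C α γ) \ {α} :=
    trIm_eq_range_diff (hC.exists_TrW_eq (zero_le.trans_lt h1) h2.le (h3.trans h4))
  rw [hC.trIm_eq_union h1 h2 h3 h4]
  rcases hC.TrW_rho2_eq_or hcoh h1 h2 h3 h4 with hγ | ⟨-, hstep⟩
  · rw [hγ, ← hαγ]
    exact insert_eq_of_mem (mem_union_right _ (hαγ ▸ ⟨⟨0, rfl⟩, h2.ne'⟩))
  · rw [hstep, hαγ, range_TrW (b := γ) 1, Order.Iio_one, image_singleton, TrW_zero,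
      singleton_union, insert_sdiff_of_notMem _ (notMem_singleton_iff.mpr h2.ne'), union_insert]

theorem hColor_mem_image_trIm (hC : IsCSeq κo C)
    (hcoh : ∀ α < κo, ∀ δ ∈ accSet (C α), C δ = C α ∩ Iio δ)
    (h1 : lam2 C γ β < α) (h2 : α < γ) (h3 : γ < β) (h4 : β < κo) (μ : Cardinal) :
    hColor C μ γ ∈ hColor C μ '' trIm C α β := by
  rw [hC.trIm_eq_union h1 h2 h3 h4]
  rcases hC.TrW_rho2_eq_or hcoh h1 h2 h3 h4 with hγ | ⟨⟨δ, hδ, hCγ⟩, -⟩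
  · exact mem_image_of_mem _ (mem_union_right _ ⟨⟨0, hγ⟩, h2.ne'⟩)
  · have hne : (C δ ∩ Iio γ).Nonempty :=
      hCγ ▸ (hC.nonempty_inter_Ici (zero_le.trans_lt h1) h2 (h3.trans h4)).mono inter_subset_left
    refine ⟨δ, mem_union_left _ hδ, ?_⟩
    rw [hColor, hColor, hCγ, csInf_inter_Iio hne]

end IsCSeq

theorem stmt3_general (κ μ : Cardinal) (C : Ordinal → Set Ordinal) (hC : IsCSeq κ.ord C)
    (hcoh : ∀ α < κ.ord, ∀ δ ∈ accSet (C α), C δ = C α ∩ Set.Iio δ)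
    (α β γ : Ordinal)
    (h1 : lam2 C γ β < α) (h2 : α < γ) (h3 : γ < β) (h4 : β < κ.ord) :
    hColor C μ '' trIm C α β = hColor C μ '' trIm C α γ ∪ hColor C μ '' trIm C γ β ∧
      dColor C μ α β = max (dColor C μ α γ) (dColor C μ γ β) := by
  have himage :
      hColor C μ '' trIm C α β = hColor C μ '' trIm C α γ ∪ hColor C μ '' trIm C γ β := by
    rw [← insert_eq_of_mem (hC.hColor_mem_image_trIm hcoh h1 h2 h3 h4 μ), ← image_insert_eq,
      hC.insert_trIm_eq_union hcoh h1 h2 h3 h4, image_union, union_comm]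
  refine ⟨himage, ?_⟩
  rw [dColor, himage, csSup_union' (finite_trIm.image _).bddAbove (finite_trIm.image _).bddAbove]
  rfl

/-- Claim 3.1.1: for a coherent `C`-sequence and the coloring `h` derived from `μ`,
if `λ₂(γ,β) < α < γ < β < κ` then
`im(tr_h(α,β)) = im(tr_h(α,γ)) ∪ im(tr_h(γ,β))`, and in particular
`d(α,β) = max{d(α,γ), d(γ,β)}`. -/
theorem stmt3 (κ μ : Cardinal) (hreg : κ.IsRegular) (huncb : Cardinal.aleph 0 < κ)
    (hμ : μ ≤ κ) (C : Ordinal → Set Ordinal) (hC : IsCSeq κ.ord C)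
    (hcoh : ∀ α < κ.ord, ∀ δ ∈ accSet (C α), C δ = C α ∩ Set.Iio δ)
    (α β γ : Ordinal)
    (h1 : lam2 C γ β < α) (h2 : α < γ) (h3 : γ < β) (h4 : β < κ.ord) :
    hColor C μ '' trIm C α β = hColor C μ '' trIm C α γ ∪ hColor C μ '' trIm C γ β ∧
      dColor C μ α β = max (dColor C μ α γ) (dColor C μ γ β) :=
  stmt3_general κ μ C hC hcoh α β γ h1 h2 h3 h4
end

section
/- Suppose c : [κ]² → θ is a closed coloring, i.e., for all β < κ and i < θ the set {α < β : c(α,β) ≤ i} is closed below β (closed in the order topology on β). If c witnesses U(κ,2,θ,χ), then c witnesses U(κ,κ,θ,χ). -/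
open Cardinal Set

/-- A set (of a `Type 1`, such as sets of ordinals or families of such sets)
has cardinality exactly the (small) cardinal `κ`. -/
def cardEq {X : Type 1} (s : Set X) (κ : Cardinal.{0}) : Prop :=
  #s = Cardinal.lift.{1} κ

/-- A set has cardinality at most `κ`. -/
def cardLE {X : Type 1} (s : Set X) (κ : Cardinal.{0}) : Prop :=
  #s ≤ Cardinal.lift.{1} κ

/-- A set has cardinality less than `κ`. -/
def cardLT {X : Type 1} (s : Set X) (κ : Cardinal.{0}) : Prop :=
  #s < Cardinal.lift.{1} κ



/-- The set of ordinals `a` has order type (exactly) the ordinal `σ`. -/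
def otpEq (a : Set Ordinal) (σ : Ordinal.{0}) : Prop :=
  Ordinal.type ((· < ·) : a → a → Prop) = Ordinal.lift.{1} σ

/-- `a < b` elementwise: every element of `a` is below every element of `b`. -/
def setBelow (a b : Set Ordinal) : Prop := ∀ x ∈ a, ∀ y ∈ b, x < y

/-- `c[a × b] = {τ}`: the coloring `c` is constantly `τ` on `a × b`. -/
def constOn (c : Ordinal → Ordinal → Ordinal) (a b : Set Ordinal) (τ : Ordinal) : Prop :=
  Set.image2 c a b = {τ}

/-- `𝒜` is a `κ`-sized pairwise disjoint subfamily of `[κ]^σ`. -/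
def KappaFam (κ : Cardinal.{0}) (σ : Ordinal) (𝒜 : Set (Set Ordinal)) : Prop :=
  (∀ a ∈ 𝒜, a ⊆ Set.Iio κ.ord ∧ otpEq a σ) ∧ 𝒜.PairwiseDisjoint id ∧ cardEq 𝒜 κ

/-- `c` witnesses `Pr₁(κ, κ, θ, χ)`. -/
def IsPr1 (κ θ χ : Cardinal.{0}) (c : Ordinal → Ordinal → Ordinal) : Prop :=
  ∀ σ < χ.ord, ∀ 𝒜 : Set (Set Ordinal), KappaFam κ σ 𝒜 →
    ∀ ξ < θ.ord, ∃ a ∈ 𝒜, ∃ b ∈ 𝒜, setBelow a b ∧ constOn c a b ξ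

/-- `Pr₁(κ, κ, θ, χ)`. -/
def Pr1 (κ θ χ : Cardinal.{0}) : Prop :=
  ∃ c : Ordinal → Ordinal → Ordinal,
    (∀ α β : Ordinal, α < β → β < κ.ord → c α β < θ.ord) ∧ IsPr1 κ θ χ c

/-- `c` witnesses `U₁(κ, 2, θ, χ)`. -/
def IsU1 (κ θ χ : Cardinal.{0}) (c : Ordinal → Ordinal → Ordinal) : Prop :=
  ∀ σ < χ.ord, ∀ 𝒜 : Set (Set Ordinal), KappaFam κ σ 𝒜 →
    ∀ ε < θ.ord, ∃ a ∈ 𝒜, ∃ b ∈ 𝒜, setBelow a b ∧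
      ∃ τ, ε < τ ∧ τ < θ.ord ∧ constOn c a b τ

/-- `U₁(κ, 2, θ, χ)`. -/
def U1 (κ θ χ : Cardinal.{0}) : Prop :=
  ∃ c : Ordinal → Ordinal → Ordinal,
    (∀ α β : Ordinal, α < β → β < κ.ord → c α β < θ.ord) ∧ IsU1 κ θ χ c

/-- `c` witnesses `U(κ, μ, θ, χ)`. -/
def IsU (κ μ θ χ : Cardinal.{0}) (c : Ordinal → Ordinal → Ordinal) : Prop :=
  ∀ σ < χ.ord, ∀ 𝒜 : Set (Set Ordinal), KappaFam κ σ 𝒜 →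
    ∀ τ < θ.ord, ∃ ℬ ⊆ 𝒜, cardEq ℬ μ ∧
      ∀ a ∈ ℬ, ∀ b ∈ ℬ, setBelow a b → ∀ z ∈ Set.image2 c a b, τ ≤ z

/-- `𝒜 ∈ 𝔸^κ_χ`: a pairwise disjoint family of `κ` many (nonempty) subsets of `κ`,
with the supremum of the cardinalities of its members below `χ`. -/
def AFam (κ χ : Cardinal.{0}) (𝒜 : Set (Set Ordinal)) : Prop :=
  (∀ a ∈ 𝒜, a ⊆ Set.Iio κ.ord ∧ a.Nonempty) ∧ 𝒜.PairwiseDisjoint id ∧ cardEq 𝒜 κ ∧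
    ∃ ν < χ, ∀ a ∈ 𝒜, cardLE a ν

/-- `T_c(𝒜)`: the set of `τ < θ` so that `c[a × b] = {τ}` for some `a < b` from `𝒜`. -/
def Tc (θ : Cardinal.{0}) (c : Ordinal → Ordinal → Ordinal) (𝒜 : Set (Set Ordinal)) :
    Set Ordinal :=
  {τ | τ < θ.ord ∧ ∃ a ∈ 𝒜, ∃ b ∈ 𝒜, setBelow a b ∧ constOn c a b τ}

/-- The collection `F_{c,χ}` of subsets of `θ` containing some `T_c(𝒜)`, `𝒜 ∈ 𝔸^κ_χ`. -/
def Fc (κ θ χ : Cardinal.{0}) (c : Ordinal → Ordinal → Ordinal) : Set (Set Ordinal) :=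
  {T | T ⊆ Set.Iio θ.ord ∧ ∃ 𝒜 : Set (Set Ordinal), AFam κ χ 𝒜 ∧ Tc θ c 𝒜 ⊆ T}

/-- `F` is a (proper) `χ`-complete filter on `θ`. -/
def IsNiceFilter (θ χ : Cardinal.{0}) (F : Set (Set Ordinal)) : Prop :=
  (∀ T ∈ F, T ⊆ Set.Iio θ.ord) ∧ Set.Iio θ.ord ∈ F ∧ ∅ ∉ F ∧
    (∀ S ∈ F, ∀ T, S ⊆ T → T ⊆ Set.Iio θ.ord → T ∈ F) ∧
    (∀ I : Set (Set Ordinal), I ⊆ F → I.Nonempty → cardLT I χ → ⋂₀ I ∈ F)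

/-- `F` is a `χ`-complete uniform filter on `θ`. -/
def IsUniformFilter (θ χ : Cardinal.{0}) (F : Set (Set Ordinal)) : Prop :=
  IsNiceFilter θ χ F ∧ ∀ T ∈ F, cardEq T θ

/-- `X` is `F`-positive. -/
def FPos (F : Set (Set Ordinal)) (X : Set Ordinal) : Prop :=
  ∀ T ∈ F, (X ∩ T).Nonempty

/-!
Fix `τ < θ` and pick `i` such that every colour above `i` is at least `τ`. Call `a ∈ 𝒜` high
for `δ` if `a` lies above `δ` and `c(δ, β) > i` for all `β ∈ a`.

Every large enough `δ < κ` has a high block: otherwise stuck ordinals `δ`, each followed by a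
block of `𝒜`, give a `κ`-family of sets `{δ} ∪ a` of order type `1 + σ < χ`, and a pair
`{δ₁} ∪ a₁ < {δ₂} ∪ a₂` on which `c > i`, provided by `U(κ, 2, θ, χ)`, makes `a₂` high for `δ₁`.

So choose a high block `g γ` for every large `γ`. Let `γ` be closed under `δ ↦ sup (g δ)`, with
`cf γ = χ > |g γ|`. As `c(γ, β) > i` for `β ∈ g γ`, closedness of `c` bounds the `α < γ` with
`c(α, β) ≤ i` for some `β ∈ g γ` by some `e γ < γ`. By a pressing-down argument on these closure
points, `e` is bounded by one `B` on `κ` many of them, and the blocks `g γ` for those `γ > B` are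
as required.
-/

open Ordinal Order

universe u

def ClosedUnder (F : Ordinal.{u} → Ordinal.{u}) (γ : Ordinal.{u}) : Prop :=
  ∀ δ < γ, F δ < γ

theorem sSup_lt_ord_of_isRegular {κ : Cardinal.{u}} (hκ : κ.IsRegular) {s : Set Ordinal.{u}}
    (hs : s ⊆ Iio κ.ord) (h : #s < Cardinal.lift.{u + 1} κ) : sSup s < κ.ord :=
  sSup_lt_of_lt_cof (by rwa [← lift_cof, hκ.cof_ord]) hs

theorem mk_eq_of_unbounded {κ : Cardinal.{u}} (hκ : κ.IsRegular) {T : Set Ordinal.{u}}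
    (hT : T ⊆ Iio κ.ord) (hunb : ∀ d < κ.ord, ∃ γ ∈ T, d < γ) :
    #T = Cardinal.lift.{u + 1} κ := by
  refine le_antisymm ?_ (not_lt.1 fun hlt => ?_)
  · simpa using mk_le_mk_of_subset hT
  · obtain ⟨γ, hγ, hlt'⟩ := hunb _ (sSup_lt_ord_of_isRegular hκ hT hlt)
    exact (le_csSup ⟨κ.ord, fun x hx => (hT hx).le⟩ hγ).not_gt hlt'

theorem closedUnder_nfp {F G : Ordinal.{u} → Ordinal.{u}} (hG : ∀ x, ∀ δ < x, F δ < G x)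
    (a : Ordinal.{u}) : ClosedUnder F (nfp G a) := by
  intro δ hδ
  obtain ⟨n, hn⟩ := lt_nfp_iff.1 hδ
  calc F δ < G (G^[n] a) := hG _ δ hn
    _ = G^[n + 1] a := (Function.iterate_succ_apply' G n a).symm
    _ ≤ nfp G a := iterate_le_nfp G a (n + 1)

theorem closedUnder_deriv {F G : Ordinal.{u} → Ordinal.{u}} (hG : ∀ x, ∀ δ < x, F δ < G x)
    (o : Ordinal.{u}) : ClosedUnder F (Ordinal.deriv G o) := by
  induction o using limitRecOn with
  | zero => rw [deriv_zero_right]; exact closedUnder_nfp hG 0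
  | add_one o _ => rw [deriv_add_one]; exact closedUnder_nfp hG _
  | limit o ho IH =>
    have : Small.{u} {o' // o' < o} := small_Iio o
    intro δ hδ
    rw [deriv_limit G ho] at hδ ⊢
    obtain ⟨o', hδo'⟩ := Ordinal.lt_iSup_iff.1 hδ
    exact (IH o' o'.2 δ hδo').trans_le (Ordinal.le_iSup _ o')

theorem exists_closedUnder {κ : Cardinal.{u}} (hκ : κ.IsRegular) (hκω : ℵ₀ < κ)
    {F : Ordinal.{u} → Ordinal.{u}} (hF : ∀ δ < κ.ord, F δ < κ.ord) {o : Ordinal.{u}}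
    (ho : IsSuccLimit o) (hoκ : o < κ.ord) {d : Ordinal.{u}} (hd : d < κ.ord) :
    ∃ γ, d < γ ∧ γ < κ.ord ∧ γ.cof = o.cof ∧ ClosedUnder F γ := by
  set G : Ordinal.{u} → Ordinal.{u} := fun x => ⨆ δ : Iio x, max (F δ) d + 1
  have hG : ∀ x, ∀ δ < x, max (F δ) d < G x := fun x δ hδ =>
    (lt_add_one _).trans_le (Ordinal.le_iSup (fun δ : Iio x => max (F δ) d + 1) ⟨δ, hδ⟩)
  have hGκ : ∀ x < κ.ord, G x < κ.ord := fun x hx => by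
    refine lift_iSup_add_one_lt_of_lt_cof ?_ fun δ => max_lt (hF δ (δ.2.trans hx)) hd
    rw [Cardinal.mk_Iio_ordinal, ← lift_cof, hκ.cof_ord, Cardinal.lift_lift, Cardinal.lift_lt,
      ← lt_ord]
    exact hx
  have hγ := closedUnder_deriv hG o
  have hcof : (Ordinal.deriv G o).cof = o.cof := cof_map_of_isNormal (isNormal_deriv G) ho
  have hγ0 : 0 < Ordinal.deriv G o := by
    rw [← cof_pos, hcof, cof_pos]; exact ho.bot_lt
  refine ⟨_, (le_max_right _ _).trans_lt (hγ 0 hγ0), deriv_lt_ord hκ hκω.ne' hGκ hoκ, hcof,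
    fun δ hδ => (le_max_left _ _).trans_lt (hγ δ hδ)⟩

/-- A weak form of Fodor's pressing-down lemma. -/
theorem exists_unbounded_of_regressive {κ : Cardinal.{u}} (hκ : κ.IsRegular) (hκω : ℵ₀ < κ)
    {F : Ordinal.{u} → Ordinal.{u}} (hF : ∀ δ < κ.ord, F δ < κ.ord) {o : Ordinal.{u}}
    (ho : IsSuccLimit o) (hoκ : o < κ.ord) {e : Ordinal.{u} → Ordinal.{u}}
    (he : ∀ γ < κ.ord, γ.cof = o.cof → ClosedUnder F γ → e γ < γ) :
    ∃ B < κ.ord, ∀ d < κ.ord,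
      ∃ γ, d < γ ∧ γ < κ.ord ∧ γ.cof = o.cof ∧ ClosedUnder F γ ∧ e γ ≤ B := by
  by_contra! hbdd
  choose! h hhκ hh using hbdd
  obtain ⟨γ, -, hγκ, hγcof, hγ⟩ := exists_closedUnder hκ hκω (F := fun δ => max (F δ) (h δ))
    (fun δ hδ => max_lt (hF δ hδ) (hhκ δ hδ)) ho hoκ hκ.ord_pos
  have hγF : ClosedUnder F γ := fun δ hδ => (le_max_left _ _).trans_lt (hγ δ hδ)
  have heγ := he γ hγκ hγcof hγF
  have hhγ : h (e γ) < γ := (le_max_right _ _).trans_lt (hγ _ heγ)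
  exact (hh (e γ) (heγ.trans hγκ) γ hhγ hγκ hγcof hγF).false

theorem exists_pred_of_lt_ord {θ : Cardinal.{u}} {τ : Ordinal.{u}}
    (hτθ : τ < θ.ord) (hτ : τ ≠ 0) : ∃ i, i + 1 < θ.ord ∧ ∀ z, i < z → τ ≤ z := by
  rcases zero_or_succ_or_isSuccLimit τ with h0 | ⟨i, rfl⟩ | hlim
  · exact absurd h0 hτ
  · exact ⟨i, by rwa [← succ_eq_add_one], fun z => succ_le_of_lt⟩
  · have hθ : ℵ₀ ≤ θ := by
      rw [← ord_le_ord, ord_aleph0]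
      exact (omega0_le_of_isSuccLimit hlim).trans hτθ.le
    exact ⟨τ, (isSuccLimit_ord hθ).add_one_lt hτθ, fun z => le_of_lt⟩

theorem sSup_union_inter_Iio_lt {S : Set Ordinal.{u}} {β γ : Ordinal.{u}}
    (hS : ∀ δ ≤ β, 0 < δ → sSup ((S ∪ {β}) ∩ Iio δ) = δ → δ ∈ S ∪ {β})
    (hγ : 0 < γ) (hγβ : γ < β) (hγS : γ ∉ S) : sSup ((S ∪ {β}) ∩ Iio γ) < γ :=
  (csSup_le' fun _ hx => hx.2.le).lt_of_ne fun heq =>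
    (hS γ hγβ.le hγ heq).elim hγS hγβ.ne

theorem setBelow.disjoint {a b : Set Ordinal.{u}} (h : setBelow a b) : Disjoint a b :=
  Set.disjoint_left.2 fun x hxa hxb => (h x hxa x hxb).false

theorem not_setBelow_self {a : Set Ordinal.{u}} (ha : a.Nonempty) : ¬ setBelow a a :=
  fun h => ha.elim fun x hx => (h x hx x hx).false

def IncreasingOn (w : Ordinal.{u} → Set Ordinal.{u}) (T : Set Ordinal.{u}) : Prop :=
  ∀ γ₁ ∈ T, ∀ γ₂ ∈ T, γ₁ < γ₂ → setBelow (w γ₁) (w γ₂)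

namespace IncreasingOn

variable {w : Ordinal.{u} → Set Ordinal.{u}} {T : Set Ordinal.{u}}

theorem lt_of_setBelow (hw : IncreasingOn w T) (hne : ∀ γ ∈ T, (w γ).Nonempty) {γ₁ γ₂ : Ordinal}
    (h₁ : γ₁ ∈ T) (h₂ : γ₂ ∈ T) (h : setBelow (w γ₁) (w γ₂)) : γ₁ < γ₂ := by
  rcases lt_trichotomy γ₁ γ₂ with hlt | rfl | hgt
  · exact hlt
  · exact absurd h (not_setBelow_self (hne _ h₁))
  · obtain ⟨x, hx⟩ := hne _ h₁
    obtain ⟨y, hy⟩ := hne _ h₂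
    exact ((h x hx y hy).trans (hw _ h₂ _ h₁ hgt y hy x hx)).false.elim

theorem injOn (hw : IncreasingOn w T) (hne : ∀ γ ∈ T, (w γ).Nonempty) : InjOn w T := by
  intro γ₁ h₁ γ₂ h₂ heq
  by_contra hne'
  rcases lt_or_gt_of_ne hne' with hlt | hgt
  · exact not_setBelow_self (hne _ h₁) (heq ▸ hw _ h₁ _ h₂ hlt)
  · exact not_setBelow_self (hne _ h₂) (heq ▸ hw _ h₂ _ h₁ hgt)

theorem pairwiseDisjoint_image (hw : IncreasingOn w T) : (w '' T).PairwiseDisjoint id := by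
  rintro _ ⟨γ₁, h₁, rfl⟩ _ ⟨γ₂, h₂, rfl⟩ hne
  rcases lt_trichotomy γ₁ γ₂ with hlt | rfl | hgt
  · exact (hw _ h₁ _ h₂ hlt).disjoint
  · exact absurd rfl hne
  · exact (hw _ h₂ _ h₁ hgt).disjoint.symm

end IncreasingOn

theorem increasingOn_of_closedUnder {w : Ordinal.{u} → Set Ordinal.{u}} {T : Set Ordinal.{u}}
    {F : Ordinal.{u} → Ordinal.{u}} (hwF : ∀ γ ∈ T, ∀ x ∈ w γ, x ≤ F γ)
    (hT : ∀ γ ∈ T, ClosedUnder F γ) (hw : ∀ γ ∈ T, ∀ y ∈ w γ, γ < y) : IncreasingOn w T :=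
  fun γ₁ h₁ γ₂ h₂ hlt x hx y hy =>
    ((hwF γ₁ h₁ x hx).trans_lt (hT γ₂ h₂ γ₁ hlt)).trans (hw γ₂ h₂ y hy)

theorem exists_unbounded_increasingOn {κ : Cardinal.{u}} (hκ : κ.IsRegular) (hκω : ℵ₀ < κ)
    {b : Ordinal.{u} → Set Ordinal.{u}} (hbκ : ∀ δ < κ.ord, b δ ⊆ Iio κ.ord)
    (hbsup : ∀ δ < κ.ord, sSup (b δ) < κ.ord) (habove : ∀ δ < κ.ord, ∀ x ∈ b δ, δ < x) :
    ∃ T ⊆ Iio κ.ord, (∀ d < κ.ord, ∃ γ ∈ T, d < γ) ∧ IncreasingOn b T := by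
  refine ⟨{γ | γ < κ.ord ∧ ClosedUnder (fun δ => sSup (b δ)) γ}, fun γ hγ => hγ.1,
    fun d hd => ?_, increasingOn_of_closedUnder
      (fun γ hγ x hx => le_csSup ⟨κ.ord, fun y hy => (hbκ γ hγ.1 hy).le⟩ hx)
      (fun γ hγ => hγ.2) fun γ hγ => habove γ hγ.1⟩
  obtain ⟨γ, hdγ, hγκ, -, hγ⟩ := exists_closedUnder hκ hκω hbsup isSuccLimit_omega0
    (by rwa [← ord_aleph0, ord_lt_ord]) hd
  exact ⟨γ, ⟨hγκ, hγ⟩, hdγ⟩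

theorem exists_lt_mem_of_cardEq_two {T : Set Ordinal} {w : Ordinal → Set Ordinal}
    {ℬ : Set (Set Ordinal)} (hℬ : ℬ ⊆ w '' T) (h2 : cardEq ℬ 2) :
    ∃ γ₁ ∈ T, ∃ γ₂ ∈ T, γ₁ < γ₂ ∧ w γ₁ ∈ ℬ ∧ w γ₂ ∈ ℬ := by
  have hℬ2 : ℬ.Nontrivial := by
    rw [← nontrivial_coe_sort, ← one_lt_iff_nontrivial, h2]
    simp
  obtain ⟨_, hx, _, hy, hxy⟩ := hℬ2
  obtain ⟨γ₁, h₁, rfl⟩ := hℬ hx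
  obtain ⟨γ₂, h₂, rfl⟩ := hℬ hy
  rcases lt_or_gt_of_ne fun h => hxy (congrArg w h) with hlt | hgt
  exacts [⟨_, h₁, _, h₂, hlt, hx, hy⟩, ⟨_, h₂, _, h₁, hgt, hy, hx⟩]

theorem mk_eq_of_otpEq {a : Set Ordinal} {σ : Ordinal.{0}} (h : otpEq a σ) :
    #a = Cardinal.lift.{1} σ.card := by
  simpa [Ordinal.card_type, ← Ordinal.lift_card] using congrArg Ordinal.card h

theorem sSup_lt_of_otpEq {κ : Cardinal.{0}} (hκ : κ.IsRegular) {a : Set Ordinal} {σ : Ordinal.{0}}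
    (ha : a ⊆ Iio κ.ord) (h : otpEq a σ) (hσ : σ < κ.ord) : sSup a < κ.ord :=
  sSup_lt_ord_of_isRegular hκ ha (by rw [mk_eq_of_otpEq h, Cardinal.lift_lt]; exact lt_ord.1 hσ)

theorem otpEq_insert {a : Set Ordinal} {σ : Ordinal.{0}} (h : otpEq a σ) {δ : Ordinal}
    (hδ : ∀ x ∈ a, δ < x) : otpEq (insert δ a) (1 + σ) := by
  let f : PUnit.{2} ⊕ₗ a → ↥(insert δ a) := fun x =>
    Sum.elim (fun _ => ⟨δ, mem_insert _ _⟩) (fun y : a => ⟨y, mem_insert_of_mem _ y.2⟩) (ofLex x)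
  have hf : StrictMono f := by
    rintro (⟨⟩ | x) (⟨⟩ | y) hxy
    · exact absurd (Sum.lex_inl_inl.1 hxy) (lt_irrefl _)
    · exact hδ y y.2
    · exact absurd hxy Sum.lex_inr_inl
    · have hxy' : x < y := Sum.Lex.inr_lt_inr_iff.1 hxy
      exact hxy'
  have hsurj : Function.Surjective f := by
    rintro ⟨x, rfl | hx⟩
    · exact ⟨toLex (Sum.inl PUnit.unit), rfl⟩
    · exact ⟨toLex (Sum.inr ⟨x, hx⟩), rfl⟩
  have e : Sum.Lex (α := PUnit.{2}) (β := a) (· < ·) (· < ·) ≃r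
      ((· < ·) : ↥(insert δ a) → ↥(insert δ a) → Prop) :=
    (hf.orderIsoOfSurjective f hsurj).toRelIsoLT
  rw [otpEq, ← e.ordinalType_congr, type_sum_lex, type_eq_one_of_unique, h, Ordinal.lift_add,
    Ordinal.lift_one]

theorem cardEq_image_of_unbounded {κ : Cardinal.{0}} (hκ : κ.IsRegular) {T : Set Ordinal}
    (hT : T ⊆ Iio κ.ord) (hunb : ∀ d < κ.ord, ∃ γ ∈ T, d < γ) {w : Ordinal → Set Ordinal}
    (hw : InjOn w T) : cardEq (w '' T) κ := by
  rw [cardEq, mk_image_eq_of_injOn w T hw, mk_eq_of_unbounded hκ hT hunb]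

namespace KappaFam

variable {κ : Cardinal.{0}} {σ : Ordinal.{0}} {𝒜 : Set (Set Ordinal)}

theorem nonempty (h : KappaFam κ σ 𝒜) (hκ : ℵ₀ ≤ κ) {a : Set Ordinal} (ha : a ∈ 𝒜) :
    a.Nonempty := by
  by_contra hae
  rw [not_nonempty_iff_eq_empty] at hae
  have hσ : Cardinal.lift.{1} σ.card = 0 := by
    rw [← mk_eq_of_otpEq (h.1 a ha).2, hae, mk_eq_zero]
  have h𝒜 : 𝒜 ⊆ {∅} := fun b hb => by
    rw [mem_singleton_iff, ← Set.isEmpty_coe_sort, ← Cardinal.mk_eq_zero_iff,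
      mk_eq_of_otpEq (h.1 b hb).2, hσ]
  have h1 : Cardinal.lift.{1} κ ≤ 1 :=
    h.2.2.symm.le.trans ((mk_le_mk_of_subset h𝒜).trans_eq (mk_singleton _))
  exact (one_lt_aleph0.trans_le hκ).not_ge (by simpa using h1)

theorem exists_above (h : KappaFam κ σ 𝒜) (hκ : ℵ₀ ≤ κ) {b : Ordinal} (hb : b < κ.ord) :
    ∃ a ∈ 𝒜, ∀ x ∈ a, b < x := by
  by_contra! hmeet
  choose w hw hwb using fun a : 𝒜 => hmeet a.1 a.2
  have hinj : Function.Injective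
      fun a : 𝒜 => (⟨w a, Order.lt_add_one_iff.2 (hwb a)⟩ : Iio (b + 1)) := by
    intro a₁ a₂ heq
    by_contra hne
    have hw₁₂ : w a₁ = w a₂ := congrArg Subtype.val heq
    exact Set.disjoint_left.1 (h.2.1 a₁.2 a₂.2 (Subtype.coe_ne_coe.2 hne)) (hw a₁) (hw₁₂ ▸ hw a₂)
  have := mk_le_of_injective hinj
  rw [h.2.2, Cardinal.mk_Iio_ordinal, Cardinal.lift_le] at this
  exact this.not_gt (lt_ord.1 ((isSuccLimit_ord hκ).add_one_lt hb))

end KappaFam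

theorem kappaFam_image {κ : Cardinal.{0}} (hκ : κ.IsRegular) {σ : Ordinal.{0}} {T : Set Ordinal}
    (hT : T ⊆ Iio κ.ord) (hunb : ∀ d < κ.ord, ∃ γ ∈ T, d < γ) {w : Ordinal → Set Ordinal}
    (hw : IncreasingOn w T) (hne : ∀ γ ∈ T, (w γ).Nonempty)
    (hwκ : ∀ γ ∈ T, w γ ⊆ Iio κ.ord ∧ otpEq (w γ) σ) : KappaFam κ σ (w '' T) :=
  ⟨forall_mem_image.2 hwκ, hw.pairwiseDisjoint_image,
    cardEq_image_of_unbounded hκ hT hunb (hw.injOn hne)⟩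

def IsClosedColoring (κ θ : Cardinal.{0}) (c : Ordinal → Ordinal → Ordinal) : Prop :=
  ∀ β < κ.ord, ∀ i < θ.ord, ∀ δ ≤ β, 0 < δ →
    sSup (({α | α < β ∧ c α β ≤ i} ∪ {β}) ∩ Set.Iio δ) = δ →
    δ ∈ {α | α < β ∧ c α β ≤ i} ∪ {β}

def highBlocks (c : Ordinal → Ordinal → Ordinal) (𝒜 : Set (Set Ordinal)) (i δ : Ordinal) :
    Set (Set Ordinal) :=
  {a ∈ 𝒜 | (∀ x ∈ a, δ < x) ∧ ∀ β ∈ a, i < c δ β}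

section Coloring

variable {κ θ χ : Cardinal.{0}} {c : Ordinal → Ordinal → Ordinal} {σ i : Ordinal.{0}}
  {𝒜 : Set (Set Ordinal)}

theorem IsClosedColoring.exists_tail_bound (hc : IsClosedColoring κ θ c) (hi : i < θ.ord)
    {γ : Ordinal} (hγ : 0 < γ) {b : Set Ordinal} (hbκ : b ⊆ Iio κ.ord) (hγb : ∀ β ∈ b, γ < β)
    (hcγ : ∀ β ∈ b, i < c γ β) (hb : #b < Cardinal.lift.{1} γ.cof) :
    ∃ ε < γ, ∀ β ∈ b, ∀ α, ε < α → α < γ → i < c α β := by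
  set s : Ordinal → Ordinal := fun β => sSup (({α | α < β ∧ c α β ≤ i} ∪ {β}) ∩ Iio γ)
  have hs : ∀ β ∈ b, s β < γ := fun β hβ =>
    sSup_union_inter_Iio_lt (hc β (hbκ hβ) i hi) hγ (hγb β hβ) fun h => (hcγ β hβ).not_ge h.2
  refine ⟨sSup (s '' b), sSup_lt_of_lt_cof (by rw [← lift_cof]; exact mk_image_le.trans_lt hb)
    (forall_mem_image.2 hs), fun β hβ α hεα hαγ => ?_⟩
  by_contra! hcα
  have hαs : α ≤ s β :=
    le_csSup ⟨γ, fun _ hx => hx.2.le⟩ ⟨Or.inl ⟨hαγ.trans (hγb β hβ), hcα⟩, hαγ⟩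
  have hsε : s β ≤ sSup (s '' b) :=
    le_csSup ⟨γ, forall_mem_image.2 fun β hβ => (hs β hβ).le⟩ (mem_image_of_mem s hβ)
  exact (hαs.trans hsε).not_gt hεα

theorem exists_highBlocks_nonempty (hκ : κ.IsRegular) (hκω : ℵ₀ < κ) (hχ : ℵ₀ ≤ χ)
    (hχκ : χ < κ) (hU : IsU κ 2 θ χ c) (hσ : σ < χ.ord) (h𝒜 : KappaFam κ σ 𝒜)
    (hi : i + 1 < θ.ord) :
    ∃ d < κ.ord, ∀ δ, d < δ → δ < κ.ord → (highBlocks c 𝒜 i δ).Nonempty := by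
  by_contra! hstuck
  choose! st hdst hstκ hst using hstuck
  choose! A hA𝒜 hA using fun b (hb : b < κ.ord) => h𝒜.exists_above hκ.aleph0_le hb
  set w : Ordinal → Set Ordinal := fun d => insert (st d) (A (st d))
  have h1σ : 1 + σ < χ.ord :=
    isPrincipal_add_ord hχ (one_lt_of_isSuccLimit (isSuccLimit_ord hχ)) hσ
  have hw : ∀ d < κ.ord, w d ⊆ Iio κ.ord ∧ otpEq (w d) (1 + σ) := fun d hd =>
    ⟨insert_subset (hstκ d hd) (h𝒜.1 _ (hA𝒜 _ (hstκ d hd))).1,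
      otpEq_insert (h𝒜.1 _ (hA𝒜 _ (hstκ d hd))).2 (hA _ (hstκ d hd))⟩
  have habove : ∀ d < κ.ord, ∀ x ∈ w d, d < x := by
    rintro d hd x (rfl | hx)
    exacts [hdst d hd, (hdst d hd).trans (hA _ (hstκ d hd) x hx)]
  obtain ⟨T, hT, hunb, hinc⟩ := exists_unbounded_increasingOn hκ hκω (fun d hd => (hw d hd).1)
    (fun d hd => sSup_lt_of_otpEq hκ (hw d hd).1 (hw d hd).2 (h1σ.trans (ord_lt_ord.2 hχκ)))
    habove
  obtain ⟨ℬ, hℬ, hℬ2, hℬi⟩ := hU (1 + σ) h1σ (w '' T)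
    (kappaFam_image hκ hT hunb hinc (fun _ _ => insert_nonempty _ _) fun γ hγ => hw γ (hT hγ))
    (i + 1) hi
  obtain ⟨γ₁, h₁, γ₂, h₂, hlt, hm₁, hm₂⟩ := exists_lt_mem_of_cardEq_two hℬ hℬ2
  have hsb := hinc γ₁ h₁ γ₂ h₂ hlt
  have hhigh : A (st γ₂) ∈ highBlocks c 𝒜 i (st γ₁) :=
    ⟨hA𝒜 _ (hstκ _ (hT h₂)), fun x hx => hsb _ (mem_insert _ _) x (mem_insert_of_mem _ hx),
      fun β hβ => (lt_add_one i).trans_le (hℬi _ hm₁ _ hm₂ hsb _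
        (mem_image2_of_mem (mem_insert _ _) (mem_insert_of_mem _ hβ)))⟩
  rw [hst γ₁ (hT h₁)] at hhigh
  exact hhigh

theorem exists_unbounded_colors_gt (hκ : κ.IsRegular) (hκω : ℵ₀ < κ) (hχ : χ.IsRegular)
    (hχκ : χ < κ) (hc : IsClosedColoring κ θ c) (hi : i < θ.ord) {g : Ordinal → Set Ordinal}
    {d : Ordinal} (hd : d < κ.ord) (hgκ : ∀ δ < κ.ord, g δ ⊆ Iio κ.ord)
    (hgχ : ∀ δ < κ.ord, #(g δ) < Cardinal.lift.{1} χ) (hgabove : ∀ δ < κ.ord, ∀ x ∈ g δ, δ < x)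
    (hgc : ∀ δ < κ.ord, d < δ → ∀ β ∈ g δ, i < c δ β) :
    ∃ Y ⊆ Iio κ.ord, (∀ d' < κ.ord, ∃ γ ∈ Y, d' < γ) ∧ IncreasingOn g Y ∧
      ∀ γ₁ ∈ Y, ∀ γ₂ ∈ Y, γ₁ < γ₂ → ∀ α ∈ g γ₁, ∀ β ∈ g γ₂, i < c α β := by
  set F : Ordinal → Ordinal := fun δ => max d (sSup (g δ))
  have hF : ∀ δ < κ.ord, F δ < κ.ord := fun δ hδ => max_lt hd
    (sSup_lt_ord_of_isRegular hκ (hgκ δ hδ) ((hgχ δ hδ).trans (Cardinal.lift_lt.2 hχκ)))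
  have hgF : ∀ δ < κ.ord, ∀ x ∈ g δ, x ≤ F δ := fun δ hδ x hx =>
    (le_csSup ⟨κ.ord, fun y hy => (hgκ δ hδ hy).le⟩ hx).trans (le_max_right _ _)
  have htail : ∀ γ < κ.ord, γ.cof = χ.ord.cof → ClosedUnder F γ →
      ∃ ε < γ, ∀ β ∈ g γ, ∀ α, ε < α → α < γ → i < c α β := by
    intro γ hγ hcof hγF
    rw [hχ.cof_ord] at hcof
    have hγ0 : 0 < γ := by rw [← cof_pos, hcof]; exact hχ.pos
    exact hc.exists_tail_bound hi hγ0 (hgκ γ hγ) (hgabove γ hγ)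
      (hgc γ hγ ((le_max_left _ _).trans_lt (hγF 0 hγ0))) (hcof ▸ hgχ γ hγ)
  choose! e he heg using htail
  obtain ⟨B, hBκ, hB⟩ := exists_unbounded_of_regressive hκ hκω hF
    (isSuccLimit_ord hχ.aleph0_le) (ord_lt_ord.2 hχκ) he
  refine ⟨{γ | B < γ ∧ γ < κ.ord ∧ γ.cof = χ.ord.cof ∧ ClosedUnder F γ ∧ e γ ≤ B},
    fun γ hγ => hγ.2.1, fun d' hd' => ?_, increasingOn_of_closedUnder
      (fun γ hγ => hgF γ hγ.2.1) (fun γ hγ => hγ.2.2.2.1) fun γ hγ => hgabove γ hγ.2.1, ?_⟩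
  · obtain ⟨γ, hγ, hγκ, hcof, hγF, heγ⟩ := hB (max d' B) (max_lt hd' hBκ)
    exact ⟨γ, ⟨(le_max_right _ _).trans_lt hγ, hγκ, hcof, hγF, heγ⟩,
      (le_max_left _ _).trans_lt hγ⟩
  · rintro γ₁ h₁ γ₂ h₂ hlt α hα β hβ
    exact heg γ₂ h₂.2.1 h₂.2.2.1 h₂.2.2.2.1 β hβ α
      (h₂.2.2.2.2.trans_lt (h₁.1.trans (hgabove γ₁ h₁.2.1 α hα)))
      ((hgF γ₁ h₁.2.1 α hα).trans_lt (h₂.2.2.2.1 γ₁ hlt))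

theorem exists_subfamily_colors_gt (hκ : κ.IsRegular) (hκω : ℵ₀ < κ) (hχ : χ.IsRegular)
    (hχκ : χ < κ) (hc : IsClosedColoring κ θ c) (hσ : σ < χ.ord) (h𝒜 : KappaFam κ σ 𝒜)
    (hi : i < θ.ord) {d : Ordinal} (hd : d < κ.ord)
    (hhigh : ∀ δ, d < δ → δ < κ.ord → (highBlocks c 𝒜 i δ).Nonempty) :
    ∃ ℬ ⊆ 𝒜, cardEq ℬ κ ∧ ∀ a ∈ ℬ, ∀ b ∈ ℬ, setBelow a b → ∀ z ∈ image2 c a b, i < z := by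
  have hblock : ∀ δ < κ.ord, ∃ a ∈ 𝒜, (∀ x ∈ a, δ < x) ∧ (d < δ → ∀ β ∈ a, i < c δ β) := by
    intro δ hδ
    by_cases hdδ : d < δ
    · obtain ⟨a, ha𝒜, hax, hac⟩ := hhigh δ hdδ hδ
      exact ⟨a, ha𝒜, hax, fun _ => hac⟩
    · obtain ⟨a, ha𝒜, hax⟩ := h𝒜.exists_above hκ.aleph0_le hδ
      exact ⟨a, ha𝒜, hax, fun h => absurd h hdδ⟩
  choose! g hg𝒜 hgabove hgc using hblock
  obtain ⟨Y, hYκ, hYunb, hw, hYc⟩ := exists_unbounded_colors_gt hκ hκω hχ hχκ hc hi hd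
    (fun δ hδ => (h𝒜.1 _ (hg𝒜 δ hδ)).1)
    (fun δ hδ => by rw [mk_eq_of_otpEq (h𝒜.1 _ (hg𝒜 δ hδ)).2, Cardinal.lift_lt]; exact lt_ord.1 hσ)
    hgabove hgc
  have hne : ∀ γ ∈ Y, (g γ).Nonempty := fun γ hγ => h𝒜.nonempty hκ.aleph0_le (hg𝒜 γ (hYκ hγ))
  refine ⟨g '' Y, image_subset_iff.2 fun γ hγ => hg𝒜 γ (hYκ hγ),
    cardEq_image_of_unbounded hκ hYκ hYunb (hw.injOn hne), ?_⟩
  rintro _ ⟨γ₁, h₁, rfl⟩ _ ⟨γ₂, h₂, rfl⟩ hsb _ ⟨α, hα, β, hβ, rfl⟩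
  exact hYc γ₁ h₁ γ₂ h₂ (hw.lt_of_setBelow hne h₁ h₂ hsb) α hα β hβ

end Coloring

theorem stmt10_general (κ θ χ : Cardinal) (hκ : κ.IsRegular) (hκω : Cardinal.aleph 0 < κ)
    (hχ : χ.IsRegular) (hχκ : χ < κ)
    (c : Ordinal → Ordinal → Ordinal)
    (hclosed : ∀ β < κ.ord, ∀ i < θ.ord, ∀ δ ≤ β, 0 < δ →
      sSup (({α | α < β ∧ c α β ≤ i} ∪ {β}) ∩ Set.Iio δ) = δ →
      δ ∈ {α | α < β ∧ c α β ≤ i} ∪ {β})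
    (hU : IsU κ 2 θ χ c) :
    IsU κ κ θ χ c := by
  intro σ hσ 𝒜 h𝒜 τ hτ
  rw [aleph_zero] at hκω
  rcases eq_or_ne τ 0 with rfl | hτ0
  · exact ⟨𝒜, subset_rfl, h𝒜.2.2, fun _ _ _ _ _ z _ => zero_le⟩
  obtain ⟨i, hi, hiτ⟩ := exists_pred_of_lt_ord hτ hτ0
  obtain ⟨d, hd, hhigh⟩ := exists_highBlocks_nonempty hκ hκω hχ.aleph0_le hχκ hU hσ h𝒜 hi
  obtain ⟨ℬ, hℬ, hcard, hgt⟩ :=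
    exists_subfamily_colors_gt hκ hκω hχ hχκ hclosed hσ h𝒜 ((lt_add_one i).trans hi) hd hhigh
  exact ⟨ℬ, hℬ, hcard, fun a ha b hb hab z hz => hiτ z (hgt a ha b hb hab z hz)⟩

/-- If `c` is a closed coloring witnessing `U(κ,2,θ,χ)`,
then `c` witnesses `U(κ,κ,θ,χ)`. -/
theorem stmt10 (κ θ χ : Cardinal) (hκ : κ.IsRegular) (hκω : Cardinal.aleph 0 < κ)
    (hχ : χ.IsRegular) (hχκ : χ < κ) (hθκ : θ ≤ κ)
    (c : Ordinal → Ordinal → Ordinal)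
    (hrange : ∀ α β : Ordinal, α < β → β < κ.ord → c α β < θ.ord)
    (hclosed : ∀ β < κ.ord, ∀ i < θ.ord, ∀ δ ≤ β, 0 < δ →
      sSup (({α | α < β ∧ c α β ≤ i} ∪ {β}) ∩ Set.Iio δ) = δ →
      δ ∈ {α | α < β ∧ c α β ≤ i} ∪ {β})
    (hU : IsU κ 2 θ χ c) :
    IsU κ κ θ χ c :=
  stmt10_general κ θ χ hκ hκω hχ hχκ c hclosed hU
end
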